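/- Let n, m be finite types and let traceOut : Matrix (n × m) (n × m) ℂ →ₗ[ℂ] Matrix n n ℂ be defined by (traceOut M) i j = ∑ b : m, M (i, b) (j, b). Then for every Hermitian matrix H ∈ Matrix (n × m) (n × m) ℂ, ‖traceOut H‖₁ ≤ ‖H‖₁. -/

import Mathlib

/-!
For Hermitian `A` with eigenvalues `λᵢ`, `‖A‖₁ = ∑ |λᵢ| = tr (S A)` for the unitary `S = f(A)`,
`f = ±1` according to the sign. Conversely `|tr (W A)| ≤ ‖A‖₁` for every unitary `W`: in the
eigenbasis of `A` the trace is `∑ Wᵢᵢ λᵢ`, and entries of a unitary matrix have modulus at most one.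
The partial trace is adjoint to `X ↦ X ⊗ 1`, so choosing `S` for `tr_B H` gives
`‖tr_B H‖₁ = tr (S · tr_B H) = tr ((S ⊗ 1) H) ≤ ‖H‖₁`, since `S ⊗ 1` is again unitary.
-/

open scoped ComplexOrder

/-- The trace norm `‖A‖₁` of a complex matrix `A`: the trace of the positive
semidefinite square root of `Aᴴ * A`. -/
noncomputable def traceNorm {n : Type*} [Fintype n] [DecidableEq n] (A : Matrix n n ℂ) : ℝ :=
  ((Matrix.posSemidef_conjTranspose_mul_self A).1.eigenvectorUnitary.1 *
      Matrix.diagonal (((↑) : ℝ → ℂ) ∘ (√·) ∘ (Matrix.posSemidef_conjTranspose_mul_self A).1.eigenvalues) *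
      (star (Matrix.posSemidef_conjTranspose_mul_self A).1.eigenvectorUnitary : Matrix n n ℂ)).trace.re

/-- The partial trace over the second tensor factor, in the matrix representation where
the joint system is indexed by the product type `n × m`. -/
noncomputable def traceOut (n m : Type*) [Fintype m] :
    Matrix (n × m) (n × m) ℂ →ₗ[ℂ] Matrix n n ℂ where
  toFun M := Matrix.of fun i j => ∑ b : m, M (i, b) (j, b)
  map_add' M N := by
    ext i j
    simp [Finset.sum_add_distrib]
  map_smul' z M := by
    ext i j
    simp [Finset.mul_sum]

open Matrix
open scoped MatrixOrder Kronecker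

lemma Matrix.IsHermitian.trace_cfc {𝕜 n : Type*} [RCLike 𝕜] [Fintype n] [DecidableEq n]
    {A : Matrix n n 𝕜} (hA : A.IsHermitian) (f : ℝ → ℝ) :
    (hA.cfc f).trace = ∑ i, (f (hA.eigenvalues i) : 𝕜) := by
  rw [IsHermitian.cfc, Unitary.conjStarAlgAut_apply, trace_mul_cycle, Unitary.coe_star_mul_self,
    one_mul, trace_diagonal]
  rfl

lemma traceNorm_eq_re_trace_abs {n : Type*} [Fintype n] [DecidableEq n] (A : Matrix n n ℂ) :
    traceNorm A = (CFC.abs A).trace.re := by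
  have hP := posSemidef_conjTranspose_mul_self A
  rw [CFC.abs, star_eq_conjTranspose, CFC.sqrt_eq_real_sqrt _ hP.nonneg, cfcₙ_eq_cfc, hP.1.cfc_eq]
  rfl

namespace Matrix.IsHermitian

variable {n : Type*} [Fintype n] [DecidableEq n] {A : Matrix n n ℂ}

lemma traceNorm_eq_sum_abs_eigenvalues (hA : A.IsHermitian) :
    traceNorm A = ∑ i, |hA.eigenvalues i| := by
  rw [traceNorm_eq_re_trace_abs, CFC.abs_eq_cfc_norm A hA.isSelfAdjoint, hA.cfc_eq, hA.trace_cfc,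
    Complex.re_sum]
  simp

lemma exists_mem_unitaryGroup_mul_eq_abs (hA : A.IsHermitian) :
    ∃ S ∈ unitaryGroup n ℂ, S * A = CFC.abs A := by
  let sgn : ℝ → ℝ := fun x => if 0 ≤ x then 1 else -1
  have hcont : ContinuousOn sgn (spectrum ℝ A) := finite_real_spectrum.continuousOn _
  refine ⟨cfc sgn A, ?_, ?_⟩
  · refine (cfc_unitary_iff sgn A hA.isSelfAdjoint hcont).mpr fun x _ => ?_
    simp only [sgn, star_trivial]
    split_ifs <;> norm_num
  · conv_lhs => enter [2]; rw [← cfc_id' ℝ A]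
    rw [← cfc_mul .., CFC.abs_eq_cfc_norm A hA.isSelfAdjoint]
    refine cfc_congr fun x _ => ?_
    simp only [sgn, Real.norm_eq_abs]
    split_ifs with h
    · rw [one_mul, abs_of_nonneg h]
    · rw [abs_of_neg (not_le.mp h)]; ring

lemma norm_trace_mul_le_traceNorm {W : Matrix n n ℂ} (hA : A.IsHermitian)
    (hW : W ∈ unitaryGroup n ℂ) :
    ‖(W * A).trace‖ ≤ traceNorm A := by
  let V : unitaryGroup n ℂ := star hA.eigenvectorUnitary * ⟨W, hW⟩ * hA.eigenvectorUnitary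
  have htrace : (W * A).trace = ∑ i, (V : Matrix n n ℂ) i i * hA.eigenvalues i := by
    conv_lhs => rw [hA.spectral_theorem, Unitary.conjStarAlgAut_apply]
    rw [← mul_assoc, ← mul_assoc, trace_mul_comm, ← mul_assoc, ← mul_assoc]
    simp only [V, trace, diag_apply, mul_diagonal, Function.comp_apply, Submonoid.coe_mul,
      Unitary.coe_star, Complex.coe_algebraMap]
  rw [htrace, hA.traceNorm_eq_sum_abs_eigenvalues]
  refine (norm_sum_le _ _).trans (Finset.sum_le_sum fun i _ => ?_)
  rw [norm_mul, Complex.norm_real, Real.norm_eq_abs]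
  exact mul_le_of_le_one_left (abs_nonneg _) (entry_norm_bound_of_unitary V.2 i i)

end Matrix.IsHermitian

section traceOut

variable {n m : Type*} [Fintype m]

@[simp]
lemma traceOut_apply (M : Matrix (n × m) (n × m) ℂ) (i j : n) :
    traceOut n m M i j = ∑ b, M (i, b) (j, b) :=
  rfl

lemma conjTranspose_traceOut (M : Matrix (n × m) (n × m) ℂ) :
    (traceOut n m M)ᴴ = traceOut n m Mᴴ := by
  ext i j
  simp [star_sum]

lemma Matrix.IsHermitian.traceOut {M : Matrix (n × m) (n × m) ℂ} (hM : M.IsHermitian) :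
    (traceOut n m M).IsHermitian := by
  rw [IsHermitian, conjTranspose_traceOut, hM.eq]

lemma trace_kronecker_one_mul [Fintype n] [DecidableEq m] (A : Matrix n n ℂ)
    (M : Matrix (n × m) (n × m) ℂ) :
    (A ⊗ₖ (1 : Matrix m m ℂ) * M).trace = (A * traceOut n m M).trace := by
  simp only [trace, diag_apply, mul_apply, kroneckerMap_apply, one_apply, mul_ite, mul_one,
    mul_zero, ite_mul, zero_mul, Fintype.sum_prod_type, Finset.sum_ite_eq, Finset.mem_univ,
    if_true, traceOut_apply, Finset.mul_sum]
  exact Finset.sum_congr rfl fun _ _ => Finset.sum_comm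

end traceOut

/-- Discarding the second register cannot increase the trace norm of a Hermitian matrix. -/
theorem traceNorm_traceOut_le {n m : Type*} [Fintype n] [DecidableEq n]
    [Fintype m] [DecidableEq m]
    (H : Matrix (n × m) (n × m) ℂ) (hH : H.IsHermitian) :
    traceNorm (traceOut n m H) ≤ traceNorm H := by
  obtain ⟨S, hS, hSK⟩ := hH.traceOut.exists_mem_unitaryGroup_mul_eq_abs
  have hS1 : S ⊗ₖ (1 : Matrix m m ℂ) ∈ unitaryGroup (n × m) ℂ :=
    kronecker_mem_unitary hS (one_mem _)
  calc traceNorm (traceOut n m H) = (S * traceOut n m H).trace.re := by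
        rw [hSK, traceNorm_eq_re_trace_abs]
    _ ≤ ‖(S * traceOut n m H).trace‖ := Complex.re_le_norm _
    _ = ‖(S ⊗ₖ 1 * H).trace‖ := by rw [trace_kronecker_one_mul]
    _ ≤ traceNorm H := hH.norm_trace_mul_le_traceNorm hS1
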